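/- arXiv:2306.03051 — 3 statements merged into one kernel-verified Lean document; each statement's English description precedes it below -/
import Mathlib

section
/- Let α₁, α₂ be non-commuting trace-zero integral elements of a quaternion algebra B over ℚ with Nrd(α₁) = p·d·d₁² and Nrd(α₂) = p·d·d₂², and suppose Trd(α₁α₂) = -p·t for an integer t (so that ρ = -α₁α₂/p has integer trace t). Then the discriminant of the order Λ = ℤ + ℤα₁ + ℤα₂ + ℤα₁α₂ equals p⁴·(t² − 4dd₁²d₂²)², i.e., the determinant of the Gram matrix of the basis (1, α₁, α₂, α₁α₂) under the trace pairing ⟨x,y⟩ = Trd(x·ȳ) is p⁴·(Trd(ρ)² − 4·Nrd(ρ))². -/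
/-!
For trace-zero `α₁, α₂` we have `ᾱᵢ = -αᵢ`, `αᵢ² = -Nrd αᵢ` and `conj(α₁α₂) = α₂α₁`, so the trace
form pairs `1` only with `α₁α₂` and `α₁` only with `α₂`: the Gram matrix of `(1, α₁, α₂, α₁α₂)`
splits into two `2 × 2` blocks, each of determinant `4·Nrd α₁·Nrd α₂ − Trd(α₁α₂)²`.
Substituting `Nrd α₁·Nrd α₂ = p²d²d₁²d₂²` and `Trd(α₁α₂) = −pt` gives `p²(4d²d₁²d₂² − t²)`.
-/

open Quaternion

noncomputable section

/-- The reduced trace of a quaternion. -/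
def Trd {a b : ℚ} (x : ℍ[ℚ,a,b]) : ℚ := x.re + (star x).re

/-- The reduced norm of a quaternion. -/
def Nrd {a b : ℚ} (x : ℍ[ℚ,a,b]) : ℚ := (x * star x).re

theorem Matrix.det_fin_four_of_outer_inner_blocks {R : Type*} [CommRing R]
    (a b b' g c e e' f : R) :
    !![a, 0, 0, b; 0, c, e, 0; 0, e', f, 0; b', 0, 0, g].det
      = (a * g - b * b') * (c * f - e * e') := by
  rw [det_succ_row_zero, Fin.sum_univ_four]
  simp only [det_fin_three, submatrix_apply, of_apply, cons_val, Fin.succAbove, Fin.reduceSucc,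
    Fin.reduceCastSucc, Fin.reduceLT, ↓reduceIte, Fin.coe_ofNat_eq_mod]
  ring

theorem re_eq_zero_of_Trd_eq_zero {a b : ℚ} {x : ℍ[ℚ,a,b]} (h : Trd x = 0) : x.re = 0 := by
  simp only [Trd, QuaternionAlgebra.re_star, zero_mul, add_zero] at h
  linarith

theorem gram_matrix_of_Trd_eq_zero {a b : ℚ} {α₁ α₂ : ℍ[ℚ,a,b]}
    (h₁ : Trd α₁ = 0) (h₂ : Trd α₂ = 0) :
    Matrix.of (fun i j : Fin 4 =>
        Trd ((![1, α₁, α₂, α₁ * α₂] i) * star (![1, α₁, α₂, α₁ * α₂] j)))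
      = !![2, 0, 0, Trd (α₁ * α₂);
           0, 2 * Nrd α₁, -Trd (α₁ * α₂), 0;
           0, -Trd (α₁ * α₂), 2 * Nrd α₂, 0;
           Trd (α₁ * α₂), 0, 0, 2 * (Nrd α₁ * Nrd α₂)] := by
  have h₁ := re_eq_zero_of_Trd_eq_zero h₁
  have h₂ := re_eq_zero_of_Trd_eq_zero h₂
  ext i j
  fin_cases i <;> fin_cases j <;>
    simp only [Fin.zero_eta, Fin.mk_one, Fin.reduceFinMk, Matrix.of_apply, Matrix.cons_val,
      Matrix.cons_val_zero, Matrix.cons_val_one, Trd, Nrd, star_mul, one_mul,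
      QuaternionAlgebra.re_star, QuaternionAlgebra.re_mul, QuaternionAlgebra.imI_star,
      QuaternionAlgebra.imJ_star, QuaternionAlgebra.imK_star, QuaternionAlgebra.imI_mul,
      QuaternionAlgebra.imJ_mul, QuaternionAlgebra.imK_mul, QuaternionAlgebra.re_one,
      QuaternionAlgebra.imI_one, QuaternionAlgebra.imJ_one, QuaternionAlgebra.imK_one, h₁, h₂] <;>
    ring

theorem gram_det_of_inseparable_pair_general {a b : ℚ}
    (p : ℕ) (d d₁ d₂ t : ℤ)
    (α₁ α₂ : ℍ[ℚ,a,b])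
    (ht₁ : Trd α₁ = 0) (ht₂ : Trd α₂ = 0)
    (hn₁ : Nrd α₁ = ((p : ℤ) * d * d₁ ^ 2 : ℤ))
    (hn₂ : Nrd α₂ = ((p : ℤ) * d * d₂ ^ 2 : ℤ))
    (htr : Trd (α₁ * α₂) = ((-(p : ℤ) * t : ℤ) : ℚ)) :
    Matrix.det (Matrix.of fun i j : Fin 4 =>
        Trd ((![1, α₁, α₂, α₁ * α₂] i) * star (![1, α₁, α₂, α₁ * α₂] j)))
      = ((p : ℚ)) ^ 4 * (((t : ℚ)) ^ 2 - 4 * ((d : ℚ)) ^ 2 * ((d₁ : ℚ)) ^ 2 * ((d₂ : ℚ)) ^ 2) ^ 2 := by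
  rw [gram_matrix_of_Trd_eq_zero ht₁ ht₂, Matrix.det_fin_four_of_outer_inner_blocks, hn₁, hn₂, htr]
  push_cast
  ring

/-- Let `α₁, α₂` be non-commuting trace-zero integral elements of a
quaternion algebra over `ℚ` with `Nrd(α₁) = p·d·d₁²`, `Nrd(α₂) = p·d·d₂²` and
`Trd(α₁α₂) = -p·t` (so `ρ = -α₁α₂/p` has trace `t` and norm `d²d₁²d₂²`). Then the
determinant of the Gram matrix of the basis `(1, α₁, α₂, α₁α₂)` under the trace
pairing — i.e. the discriminant of `Λ = ℤ + ℤα₁ + ℤα₂ + ℤα₁α₂` — equals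
`p⁴·(t² − 4d²d₁²d₂²)² = p⁴·(Trd(ρ)² − 4·Nrd(ρ))²`. -/
theorem gram_det_of_inseparable_pair {a b : ℚ} (ha : a ≠ 0) (hb : b ≠ 0)
    (p : ℕ) (hp : p.Prime) (d d₁ d₂ t : ℤ)
    (α₁ α₂ : ℍ[ℚ,a,b])
    (ht₁ : Trd α₁ = 0) (ht₂ : Trd α₂ = 0)
    (hn₁ : Nrd α₁ = ((p : ℤ) * d * d₁ ^ 2 : ℤ))
    (hn₂ : Nrd α₂ = ((p : ℤ) * d * d₂ ^ 2 : ℤ))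
    (hcomm : α₁ * α₂ ≠ α₂ * α₁)
    (htr : Trd (α₁ * α₂) = ((-(p : ℤ) * t : ℤ) : ℚ)) :
    Matrix.det (Matrix.of fun i j : Fin 4 =>
        Trd ((![1, α₁, α₂, α₁ * α₂] i) * star (![1, α₁, α₂, α₁ * α₂] j)))
      = ((p : ℚ)) ^ 4 * (((t : ℚ)) ^ 2 - 4 * ((d : ℚ)) ^ 2 * ((d₁ : ℚ)) ^ 2 * ((d₂ : ℚ)) ^ 2) ^ 2 :=
  gram_det_of_inseparable_pair_general p d d₁ d₂ t α₁ α₂ ht₁ ht₂ hn₁ hn₂ htr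

end
end

section
/- Let p be an odd prime and B a quaternion algebra over ℚ ramified at p. If 𝒪 ⊆ B is a ℤ-order that is p-saturated, then 𝒪 is p-maximal (i.e., 𝒪 ⊗ ℤ_p is a maximal order in B ⊗ ℚ_p). -/
/-!
When `B ⊗ ℚ_p` is a division algebra, Hensel's lemma gives `‖Trd x‖² ≤ ‖Nrd x‖`, so by
`Nrd (x + y) = Nrd x + Nrd y + Trd (x ȳ)` the function `‖Nrd‖` is ultrametric. It is therefore
bounded on every finitely generated `ℤ_p`-module, and, being multiplicative, at most `1` on every
order. Conversely, an element `z = ∑ cᵢ xᵢ` with `‖Nrd z‖ ≤ 1`, written in the orthogonal basis of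
`𝒪_p`, has `Trd (z x̄ⱼ) = 2 cⱼ Nrd xⱼ`, and `v(Nrd xⱼ) ≤ 1` with `p` odd forces `cⱼ ∈ ℤ_p`. So
`𝒪_p = {z : ‖Nrd z‖ ≤ 1}` contains every order containing it.
-/

open Quaternion

noncomputable section

variable {p : ℕ} [Fact p.Prime]

/-- The reduced trace of a quaternion over `ℚ_p`. -/
def TrdP {a b : ℚ_[p]} (x : ℍ[ℚ_[p],a,b]) : ℚ_[p] := x.re + (star x).re

/-- The reduced norm of a quaternion over `ℚ_p`. -/
def NrdP {a b : ℚ_[p]} (x : ℍ[ℚ_[p],a,b]) : ℚ_[p] := (x * star x).re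

/-- The natural coefficientwise map `H(a,b)/ℚ → H(a,b)/ℚ_p`, realizing `B ⊗ ℚ_p`. -/
def localize (p : ℕ) [Fact p.Prime] {a b : ℚ} (x : ℍ[ℚ,a,b]) :
    ℍ[ℚ_[p], (a : ℚ_[p]), (b : ℚ_[p])] :=
  ⟨(x.re : ℚ_[p]), (x.imI : ℚ_[p]), (x.imJ : ℚ_[p]), (x.imK : ℚ_[p])⟩

/-- A `ℤ`-order in `H(a,b)/ℚ`. -/
def IsOrder {a b : ℚ} (O : Submodule ℤ ℍ[ℚ,a,b]) : Prop :=
  (O.FG ∧ Submodule.span ℚ (O : Set ℍ[ℚ,a,b]) = ⊤) ∧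
    (1 : ℍ[ℚ,a,b]) ∈ O ∧ ∀ x ∈ O, ∀ y ∈ O, x * y ∈ O

/-- A `ℤ_p`-order in `H(a,b)/ℚ_p`. -/
def IsOrderP {a b : ℚ_[p]} (O : Submodule ℤ_[p] ℍ[ℚ_[p],a,b]) : Prop :=
  (O.FG ∧ Submodule.span ℚ_[p] (O : Set ℍ[ℚ_[p],a,b]) = ⊤) ∧
    (1 : ℍ[ℚ_[p],a,b]) ∈ O ∧ ∀ x ∈ O, ∀ y ∈ O, x * y ∈ O

/-- The completion `𝒪_p = 𝒪 ⊗ ℤ_p` of an order, realized as the `ℤ_p`-span of its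
image in `H(a,b)/ℚ_p`. -/
def localOrder (p : ℕ) [Fact p.Prime] {a b : ℚ} (O : Submodule ℤ ℍ[ℚ,a,b]) :
    Submodule ℤ_[p] ℍ[ℚ_[p], (a : ℚ_[p]), (b : ℚ_[p])] :=
  Submodule.span ℤ_[p] (localize p '' (O : Set ℍ[ℚ,a,b]))

/-- `𝒪` is `p`-saturated: `𝒪_p` has a `ℤ_p`-basis that diagonalizes the reduced norm
form, with each basis vector of norm of `p`-adic valuation at most `1`. -/
def IsPSaturated (p : ℕ) [Fact p.Prime] {a b : ℚ} (O : Submodule ℤ ℍ[ℚ,a,b]) : Prop :=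
  ∃ x : Fin 4 → ℍ[ℚ_[p], (a : ℚ_[p]), (b : ℚ_[p])],
    Submodule.span ℤ_[p] (Set.range x) = localOrder p O ∧
    LinearIndependent ℤ_[p] x ∧
    (∀ i j, i ≠ j → TrdP (x i * star (x j)) = 0) ∧
    ∀ i, (NrdP (x i)).valuation ≤ 1

/-- `𝒪` is `p`-maximal: `𝒪_p = 𝒪 ⊗ ℤ_p` is a maximal `ℤ_p`-order in `B ⊗ ℚ_p`. -/
def IsPMaximal (p : ℕ) [Fact p.Prime] {a b : ℚ} (O : Submodule ℤ ℍ[ℚ,a,b]) : Prop :=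
  IsOrderP (localOrder p O) ∧
    ∀ O' : Submodule ℤ_[p] ℍ[ℚ_[p], (a : ℚ_[p]), (b : ℚ_[p])],
      IsOrderP O' → localOrder p O ≤ O' → O' = localOrder p O

section LocalQuaternion

variable {a b : ℚ_[p]}

lemma TrdP_eq_two_mul_re (x : ℍ[ℚ_[p],a,b]) : TrdP x = 2 * x.re := by
  rw [TrdP, QuaternionAlgebra.re_star]
  ring

lemma NrdP_eq (x : ℍ[ℚ_[p],a,b]) :
    NrdP x = x.re * x.re - a * x.imI * x.imI - b * x.imJ * x.imJ + a * b * x.imK * x.imK := by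
  simp only [NrdP, QuaternionAlgebra.re_mul, QuaternionAlgebra.re_star, QuaternionAlgebra.imI_star,
    QuaternionAlgebra.imJ_star, QuaternionAlgebra.imK_star]
  ring

lemma NrdP_one : NrdP (1 : ℍ[ℚ_[p],a,b]) = 1 := by simp [NrdP_eq]

lemma NrdP_smul (c : ℚ_[p]) (x : ℍ[ℚ_[p],a,b]) : NrdP (c • x) = c * c * NrdP x := by
  simp only [NrdP_eq, QuaternionAlgebra.re_smul, QuaternionAlgebra.imI_smul,
    QuaternionAlgebra.imJ_smul, QuaternionAlgebra.imK_smul, smul_eq_mul]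
  ring

lemma NrdP_star (x : ℍ[ℚ_[p],a,b]) : NrdP (star x) = NrdP x := by
  simp [NrdP_eq]

lemma NrdP_mul (x y : ℍ[ℚ_[p],a,b]) : NrdP (x * y) = NrdP x * NrdP y := by
  simp only [NrdP_eq, QuaternionAlgebra.re_mul, QuaternionAlgebra.imI_mul,
    QuaternionAlgebra.imJ_mul, QuaternionAlgebra.imK_mul]
  ring

lemma NrdP_pow (x : ℍ[ℚ_[p],a,b]) (n : ℕ) : NrdP (x ^ n) = NrdP x ^ n := by
  induction n with
  | zero => simp [NrdP_one]
  | succ n ih => rw [pow_succ, NrdP_mul, ih, pow_succ]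

lemma NrdP_add (x y : ℍ[ℚ_[p],a,b]) :
    NrdP (x + y) = NrdP x + NrdP y + TrdP (x * star y) := by
  simp only [NrdP_eq, TrdP_eq_two_mul_re, QuaternionAlgebra.re_add, QuaternionAlgebra.imI_add,
    QuaternionAlgebra.imJ_add, QuaternionAlgebra.imK_add, QuaternionAlgebra.re_mul,
    QuaternionAlgebra.re_star, QuaternionAlgebra.imI_star, QuaternionAlgebra.imJ_star,
    QuaternionAlgebra.imK_star]
  ring

lemma mul_self_sub_TrdP_smul_add_NrdP_smul_one (x : ℍ[ℚ_[p],a,b]) :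
    x * x - TrdP x • x + NrdP x • 1 = 0 := by
  ext <;> simp [TrdP_eq_two_mul_re, NrdP_eq, QuaternionAlgebra.re_mul,
    QuaternionAlgebra.imI_mul, QuaternionAlgebra.imJ_mul, QuaternionAlgebra.imK_mul] <;> ring

lemma TrdP_sum_smul_mul_star {ι : Type*} [Fintype ι] {x : ι → ℍ[ℚ_[p],a,b]}
    (horth : ∀ i j, i ≠ j → TrdP (x i * star (x j)) = 0) (c : ι → ℚ_[p]) (j : ι) :
    TrdP ((∑ i, c i • x i) * star (x j)) = 2 * c j * NrdP (x j) := by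
  have hre : ∀ i, i ≠ j → (x i * star (x j)).re = 0 := fun i hij => by
    simpa [TrdP_eq_two_mul_re] using horth i j hij
  rw [TrdP_eq_two_mul_re, Finset.sum_mul, ← QuaternionAlgebra.reₗ_apply, map_sum,
    Finset.sum_eq_single j (fun i _ hij => by simp [hre i hij]) (by simp)]
  simp [NrdP, mul_assoc]

end LocalQuaternion

namespace Padic

lemma norm_two_eq_one (hodd : p ≠ 2) : ‖(2 : ℚ_[p])‖ = 1 := by
  exact_mod_cast norm_natCast_eq_one_iff.mpr
    ((Nat.coprime_primes Fact.out Nat.prime_two).mpr hodd)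

lemma norm_le_inv_of_norm_lt_one {q : ℚ_[p]} (h : ‖q‖ < 1) : ‖q‖ ≤ (p : ℝ)⁻¹ := by
  simpa using (norm_lt_pow_iff_norm_le_pow_sub_one q 0).mp (by simpa using h)

lemma inv_le_norm_of_valuation_le_one {q : ℚ_[p]} (hq : q ≠ 0) (h : q.valuation ≤ 1) :
    (p : ℝ)⁻¹ ≤ ‖q‖ := by
  rw [norm_eq_zpow_neg_valuation hq, ← zpow_neg_one,
    zpow_le_zpow_iff_right₀ (by exact_mod_cast (Fact.out : p.Prime).one_lt)]
  omega

/-- The rescaling `r = t z` reduces this to Hensel's lemma for `z² - z + n/t²` at `z = 0`. -/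
lemma exists_mul_self_sub_mul_add_eq_zero {t n : ℚ_[p]} (h : ‖n‖ < ‖t‖ ^ 2) :
    ∃ r : ℚ_[p], r * r - t * r + n = 0 := by
  have ht : t ≠ 0 := fun ht => (norm_nonneg n).not_gt (by simpa [ht] using h)
  have hm : ‖n / (t * t)‖ < 1 := by
    rw [norm_div, norm_mul, div_lt_one (by positivity)]
    nlinarith
  let m : ℤ_[p] := ⟨n / (t * t), hm.le⟩
  let F : Polynomial ℤ_[p] := .X ^ 2 - .X + .C m
  have hF : ‖F.aeval (0 : ℤ_[p])‖ < ‖(Polynomial.derivative F).aeval (0 : ℤ_[p])‖ ^ 2 := by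
    have h0 : F.aeval (0 : ℤ_[p]) = m := by simp [F]
    have h1 : (Polynomial.derivative F).aeval (0 : ℤ_[p]) = -1 := by simp [F]
    rwa [h0, h1, norm_neg, norm_one, one_pow]
  obtain ⟨z, hz, -⟩ := hensels_lemma hF
  refine ⟨t * z, ?_⟩
  have hz' : (z : ℚ_[p]) * z - z + n / (t * t) = 0 := by
    have := congrArg ((↑) : ℤ_[p] → ℚ_[p]) hz
    simpa [F, sq] using this
  field_simp at hz'
  linear_combination hz'

end Padic

section DivisionAlgebra

variable {a b : ℚ_[p]} (hram : ∀ x : ℍ[ℚ_[p],a,b], x ≠ 0 → IsUnit x)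
include hram

/-- Otherwise Hensel's lemma splits the reduced characteristic polynomial of `x`, which forces
`x` to be a scalar `c`; but then `‖Trd x‖² = ‖2c‖² ≤ ‖c‖² = ‖Nrd x‖`. -/
lemma sq_norm_TrdP_le_norm_NrdP (x : ℍ[ℚ_[p],a,b]) : ‖TrdP x‖ ^ 2 ≤ ‖NrdP x‖ := by
  by_contra! h
  obtain ⟨r, hr⟩ := Padic.exists_mul_self_sub_mul_add_eq_zero h
  have hfactor : (x - r • 1) * (x - (TrdP x - r) • 1) = 0 := by
    have hexpand : (x - r • 1) * (x - (TrdP x - r) • 1)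
        = x * x - TrdP x • x + (r * (TrdP x - r)) • 1 := by
      simp only [mul_sub, sub_mul, smul_mul_assoc, mul_smul_comm, one_mul, mul_one]
      module
    rw [hexpand, show r * (TrdP x - r) = NrdP x by linear_combination -hr,
      mul_self_sub_TrdP_smul_add_NrdP_smul_one]
  obtain ⟨c, rfl⟩ : ∃ c : ℚ_[p], x = c • 1 := by
    by_cases h₁ : x - r • 1 = 0
    · exact ⟨r, sub_eq_zero.mp h₁⟩
    · exact ⟨TrdP x - r, sub_eq_zero.mp (((hram _ h₁).mul_right_eq_zero).mp hfactor)⟩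
  have htwo : ‖(2 : ℚ_[p])‖ * ‖c‖ ≤ ‖c‖ :=
    mul_le_of_le_one_left (norm_nonneg c) (by exact_mod_cast Padic.norm_int_le_one 2)
  simp only [TrdP_eq_two_mul_re, NrdP_smul, NrdP_one, QuaternionAlgebra.re_smul,
    QuaternionAlgebra.re_one, smul_eq_mul, mul_one, norm_mul, sq] at h
  exact (mul_self_le_mul_self (by positivity) htwo).not_gt h

lemma NrdP_ne_zero {x : ℍ[ℚ_[p],a,b]} (hx : x ≠ 0) : NrdP x ≠ 0 := fun h => by
  have hstar : x * star x = 0 := by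
    rw [QuaternionAlgebra.mul_star_eq_coe, show (x * star x).re = 0 from h,
      QuaternionAlgebra.coe_zero]
  exact hx (star_eq_zero.mp (((hram x hx).mul_right_eq_zero).mp hstar))

lemma norm_NrdP_add_le (x y : ℍ[ℚ_[p],a,b]) :
    ‖NrdP (x + y)‖ ≤ max ‖NrdP x‖ ‖NrdP y‖ := by
  set M := max ‖NrdP x‖ ‖NrdP y‖
  have hT : ‖TrdP (x * star y)‖ ≤ M := by
    have h := sq_norm_TrdP_le_norm_NrdP hram (x * star y)
    rw [NrdP_mul, NrdP_star, norm_mul] at h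
    nlinarith [le_max_left ‖NrdP x‖ ‖NrdP y‖, le_max_right ‖NrdP x‖ ‖NrdP y‖,
      norm_nonneg (NrdP x), norm_nonneg (NrdP y), norm_nonneg (TrdP (x * star y))]
  rw [NrdP_add]
  exact (IsUltrametricDist.norm_add_le_max _ _).trans
    (max_le (IsUltrametricDist.norm_add_le_max _ _) hT)

lemma norm_NrdP_le_of_mem_span {S : Set ℍ[ℚ_[p],a,b]} {B : ℝ} (hB : 0 ≤ B)
    (hS : ∀ s ∈ S, ‖NrdP s‖ ≤ B) {z : ℍ[ℚ_[p],a,b]} (hz : z ∈ Submodule.span ℤ_[p] S) :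
    ‖NrdP z‖ ≤ B := by
  induction hz using Submodule.span_induction with
  | mem s hs => exact hS s hs
  | zero => simpa [NrdP] using hB
  | add u v _ _ hu hv => exact (norm_NrdP_add_le hram u v).trans (max_le hu hv)
  | smul c u _ hu =>
    have hc : ‖(c : ℚ_[p])‖ ≤ 1 := c.2
    rw [← algebraMap_smul ℚ_[p] c u, PadicInt.algebraMap_apply, NrdP_smul, norm_mul, norm_mul]
    exact (mul_le_of_le_one_left (norm_nonneg _) (mul_le_one₀ hc (norm_nonneg _) hc)).trans hu

lemma exists_norm_NrdP_le_of_fg {O : Submodule ℤ_[p] ℍ[ℚ_[p],a,b]} (hO : O.FG) :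
    ∃ B : ℝ, ∀ z ∈ O, ‖NrdP z‖ ≤ B := by
  obtain ⟨T, rfl⟩ := hO
  exact ⟨(T.sup fun t => ‖NrdP t‖₊ : NNReal), fun z hz => norm_NrdP_le_of_mem_span hram
    NNReal.zero_le_coe
    (fun s hs => by exact_mod_cast Finset.le_sup (f := fun t => ‖NrdP t‖₊) hs) hz⟩

/-- The reduced norms of the powers of an element of an order stay bounded. -/
lemma norm_NrdP_le_one_of_mem {O : Submodule ℤ_[p] ℍ[ℚ_[p],a,b]} (hO : O.FG)
    (hmul : ∀ x ∈ O, ∀ y ∈ O, x * y ∈ O) {z : ℍ[ℚ_[p],a,b]} (hz : z ∈ O) :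
    ‖NrdP z‖ ≤ 1 := by
  obtain ⟨B, hB⟩ := exists_norm_NrdP_le_of_fg hram hO
  have hmem : ∀ n : ℕ, z ^ (n + 1) ∈ O := by
    intro n
    induction n with
    | zero => simpa using hz
    | succ n ih => exact pow_succ z (n + 1) ▸ hmul _ ih _ hz
  by_contra! h
  obtain ⟨n, hn⟩ := pow_unbounded_of_one_lt B h
  have hbound := hB _ (hmem n)
  rw [NrdP_pow, norm_pow] at hbound
  exact hn.not_ge ((pow_le_pow_right₀ h.le n.le_succ).trans hbound)

end DivisionAlgebra

section SaturatedBasis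

variable {a b : ℚ_[p]} (hodd : p ≠ 2) (hram : ∀ x : ℍ[ℚ_[p],a,b], x ≠ 0 → IsUnit x)
include hodd hram

/-- With `T = Trd (z x̄ⱼ) = 2 cⱼ Nrd xⱼ` one has `‖T‖² ≤ ‖Nrd xⱼ‖`; since `‖Nrd xⱼ‖ ≥ p⁻¹` and
the norms of `ℚ_p` below `1` are at most `p⁻¹`, this forces `‖T‖ ≤ ‖Nrd xⱼ‖`, i.e. `‖cⱼ‖ ≤ 1`. -/
lemma norm_le_one_of_norm_NrdP_sum_smul_le_one {ι : Type*} [Fintype ι] {x : ι → ℍ[ℚ_[p],a,b]}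
    (horth : ∀ i j, i ≠ j → TrdP (x i * star (x j)) = 0) {j : ι}
    (hlb : (p : ℝ)⁻¹ ≤ ‖NrdP (x j)‖) (c : ι → ℚ_[p])
    (hz : ‖NrdP (∑ i, c i • x i)‖ ≤ 1) : ‖c j‖ ≤ 1 := by
  have hT : ‖TrdP ((∑ i, c i • x i) * star (x j))‖ = ‖c j‖ * ‖NrdP (x j)‖ := by
    rw [TrdP_sum_smul_mul_star horth, norm_mul, norm_mul, Padic.norm_two_eq_one hodd, one_mul]
  set N := ‖NrdP (x j)‖
  set T := ‖TrdP ((∑ i, c i • x i) * star (x j))‖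
  have hN : 0 < N := (inv_pos.mpr (by exact_mod_cast (Fact.out : p.Prime).pos)).trans_le hlb
  have hT_sq : T ^ 2 ≤ N := by
    calc T ^ 2 ≤ ‖NrdP ((∑ i, c i • x i) * star (x j))‖ := sq_norm_TrdP_le_norm_NrdP hram _
      _ = ‖NrdP (∑ i, c i • x i)‖ * N := by rw [NrdP_mul, NrdP_star, norm_mul]
      _ ≤ N := mul_le_of_le_one_left hN.le hz
  have hT_le : T ≤ N := by
    by_contra! hNT
    have hT_lt_one : T < 1 := by nlinarith
    linarith [Padic.norm_le_inv_of_norm_lt_one hT_lt_one]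
  rw [hT] at hT_le
  exact (mul_le_iff_le_one_left hN).mp hT_le

lemma mem_span_of_norm_NrdP_le_one {x : Fin 4 → ℍ[ℚ_[p],a,b]} (hx : LinearIndependent ℤ_[p] x)
    (horth : ∀ i j, i ≠ j → TrdP (x i * star (x j)) = 0)
    (hlb : ∀ i, (p : ℝ)⁻¹ ≤ ‖NrdP (x i)‖)
    {z : ℍ[ℚ_[p],a,b]} (hz : ‖NrdP z‖ ≤ 1) :
    z ∈ Submodule.span ℤ_[p] (Set.range x) := by
  let e := basisOfLinearIndependentOfCardEqFinrank
    ((LinearIndependent.iff_fractionRing ℤ_[p] ℚ_[p]).mp hx)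
    (by simp [QuaternionAlgebra.finrank_eq_four])
  have he : ⇑e = x := coe_basisOfLinearIndependentOfCardEqFinrank _ _
  have hsum : ∑ i, e.repr z i • x i = z := he ▸ e.sum_repr z
  rw [← hsum]
  refine Submodule.sum_mem _ fun j _ => ?_
  let c : ℤ_[p] := ⟨e.repr z j,
    norm_le_one_of_norm_NrdP_sum_smul_le_one hodd hram horth (hlb j) _ (by rwa [hsum])⟩
  have hmem := Submodule.smul_mem (Submodule.span ℤ_[p] (Set.range x)) c
    (Submodule.subset_span (Set.mem_range_self j))
  rwa [← algebraMap_smul ℚ_[p], PadicInt.algebraMap_apply] at hmem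

end SaturatedBasis

section LocalOrder

variable {a b : ℚ} {O : Submodule ℤ ℍ[ℚ,a,b]}

lemma localize_one : localize p (1 : ℍ[ℚ,a,b]) = 1 := by
  ext <;> simp [localize]

lemma localize_mul (u v : ℍ[ℚ,a,b]) : localize p (u * v) = localize p u * localize p v := by
  ext <;> simp only [localize, QuaternionAlgebra.re_mul, QuaternionAlgebra.imI_mul,
    QuaternionAlgebra.imJ_mul, QuaternionAlgebra.imK_mul] <;> push_cast <;> ring

lemma one_mem_localOrder (h1 : (1 : ℍ[ℚ,a,b]) ∈ O) : 1 ∈ localOrder p O :=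
  localize_one (p := p) ▸ Submodule.subset_span ⟨1, h1, rfl⟩

lemma mul_mem_localOrder (hmul : ∀ x ∈ O, ∀ y ∈ O, x * y ∈ O)
    {u v : ℍ[ℚ_[p], (a : ℚ_[p]), (b : ℚ_[p])]}
    (hu : u ∈ localOrder p O) (hv : v ∈ localOrder p O) : u * v ∈ localOrder p O := by
  have hle : localOrder p O * localOrder p O ≤ localOrder p O := by
    rw [localOrder, Submodule.span_mul_span, Submodule.span_le]
    rintro _ ⟨_, ⟨x, hx, rfl⟩, _, ⟨y, hy, rfl⟩, rfl⟩
    exact Submodule.subset_span ⟨x * y, hmul x hx y hy, localize_mul x y⟩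
  exact hle (Submodule.mul_mem_mul hu hv)

lemma isOrderP_localOrder (h1 : (1 : ℍ[ℚ,a,b]) ∈ O) (hmul : ∀ x ∈ O, ∀ y ∈ O, x * y ∈ O)
    {x : Fin 4 → ℍ[ℚ_[p], (a : ℚ_[p]), (b : ℚ_[p])]}
    (hspan : Submodule.span ℤ_[p] (Set.range x) = localOrder p O)
    (hx : LinearIndependent ℤ_[p] x) : IsOrderP (localOrder p O) := by
  have hspanQ : Submodule.span ℚ_[p] (Set.range x) = ⊤ :=
    ((LinearIndependent.iff_fractionRing ℤ_[p] ℚ_[p]).mp hx).span_eq_top_of_card_eq_finrank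
      (by simp [QuaternionAlgebra.finrank_eq_four])
  refine ⟨⟨hspan ▸ Submodule.fg_span (Set.finite_range x), eq_top_mono ?_ hspanQ⟩,
    one_mem_localOrder h1, fun u hu v hv => mul_mem_localOrder hmul hu hv⟩
  exact Submodule.span_mono (hspan ▸ Submodule.subset_span)

end LocalOrder

theorem pSaturated_implies_pMaximal_general {a b : ℚ}
    (p : ℕ) [Fact p.Prime] (hodd : p ≠ 2)
    (hram : ∀ x : ℍ[ℚ_[p], (a : ℚ_[p]), (b : ℚ_[p])], x ≠ 0 → IsUnit x)
    (O : Submodule ℤ ℍ[ℚ,a,b]) (hO : IsOrder O)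
    (hsat : IsPSaturated p O) :
    IsPMaximal p O := by
  obtain ⟨x, hspan, hx, horth, hval⟩ := hsat
  have hlb : ∀ i, (p : ℝ)⁻¹ ≤ ‖NrdP (x i)‖ := fun i =>
    Padic.inv_le_norm_of_valuation_le_one (NrdP_ne_zero hram (hx.ne_zero i)) (hval i)
  refine ⟨isOrderP_localOrder hO.2.1 hO.2.2 hspan hx, fun O' hO' hle => le_antisymm ?_ hle⟩
  intro z hz
  rw [← hspan]
  exact mem_span_of_norm_NrdP_le_one hodd hram hx horth hlb
    (norm_NrdP_le_one_of_mem hram hO'.1.1 hO'.2.2 hz)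

/-- Let `p` be an odd prime and `B` a quaternion algebra over `ℚ`
ramified at `p` (i.e. `B ⊗ ℚ_p` is a division algebra). If `𝒪 ⊆ B` is a `ℤ`-order
which is `p`-saturated, then `𝒪` is `p`-maximal. -/
theorem pSaturated_implies_pMaximal {a b : ℚ} (ha : a ≠ 0) (hb : b ≠ 0)
    (p : ℕ) [Fact p.Prime] (hodd : p ≠ 2)
    (hram : ∀ x : ℍ[ℚ_[p], (a : ℚ_[p]), (b : ℚ_[p])], x ≠ 0 → IsUnit x)
    (O : Submodule ℤ ℍ[ℚ,a,b]) (hO : IsOrder O)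
    (hsat : IsPSaturated p O) :
    IsPMaximal p O :=
  pSaturated_implies_pMaximal_general p hodd hram O hO hsat

end
end

section
/- Let B be a quaternion algebra over ℚ, let α₁, α₂, α₃ ∈ B, and set α₀ = 1. Define the trilinear form m(α₁,α₂,α₃) = Trd((α₁α₂ − α₂α₁)·ᾱ₃). Then m(α₁,α₂,α₃)² = det((Trd(α_i·ᾱ_j))_{0≤i,j≤3}), and m is alternating under permutations: m(α_{σ(1)}, α_{σ(2)}, α_{σ(3)}) = sgn(σ)·m(α₁,α₂,α₃) for every σ ∈ S₃. -/
/-!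
In the coordinates of the basis `1, i, j, k` the reduced norm of `ℍ[ℚ,a,b]` is the diagonal form
`x₀² - a x₁² - b x₂² + a b x₃²`, so the Gram matrix of `α₀, …, α₃` under the trace pairing is
`M D Mᵀ` with `M` the coordinate matrix and `D = diag(2, -2a, -2b, 2ab)`, of determinant `16 a² b²`.
Since `α₀ = 1`, `det M` is the determinant of the imaginary coordinates of `α₁, α₂, α₃`, and a direct
computation gives `m(α₁,α₂,α₃) = 4ab` times that same determinant. Both claims follow: the square of `m`
is `16 a² b² (det M)²`, and `m` inherits the alternation of the determinant.
-/

open Quaternion Matrix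

noncomputable section

/-- The trilinear form `m(α₁,α₂,α₃) = Trd((α₁α₂ − α₂α₁)·ᾱ₃)`. -/
def triForm {a b : ℚ} (x y z : ℍ[ℚ,a,b]) : ℚ := Trd ((x * y - y * x) * star z)

namespace QuaternionAlgebra

variable {R ι : Type*}

def coordMatrix {c₁ c₂ c₃ : R} (v : ι → ℍ[R,c₁,c₂,c₃]) : Matrix ι (Fin 4) R :=
  Matrix.of fun i => equivTuple c₁ c₂ c₃ (v i)

def imCoordMatrix {c₁ c₂ c₃ : R} (v : ι → ℍ[R,c₁,c₂,c₃]) : Matrix ι (Fin 3) R :=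
  (coordMatrix v).submatrix id Fin.succ

variable [CommRing R]

theorem det_coordMatrix_vecCons_one {c₁ c₂ c₃ : R} (v : Fin 3 → ℍ[R,c₁,c₂,c₃]) :
    (coordMatrix (vecCons 1 v)).det = (imCoordMatrix v).det := by
  simp [det_succ_row_zero, Fin.sum_univ_succ, coordMatrix, imCoordMatrix]

variable {a b : R}

theorem re_mul_star (x y : ℍ[R,a,b]) :
    (x * star y).re =
      x.re * y.re - a * x.imI * y.imI - b * x.imJ * y.imJ + a * b * x.imK * y.imK := by
  simp only [re_mul, re_star, imI_star, imJ_star, imK_star]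
  ring

theorem re_commutator_mul_star (v : Fin 3 → ℍ[R,a,b]) :
    ((v 0 * v 1 - v 1 * v 0) * star (v 2)).re = 2 * a * b * (imCoordMatrix v).det := by
  simp only [imCoordMatrix, coordMatrix, det_fin_three, submatrix_apply, of_apply, equivTuple_apply,
    id_eq, Fin.succ_zero_eq_one, Fin.succ_one_eq_two, Fin.reduceSucc, cons_val, re_mul, re_sub,
    re_star, imI_sub, imI_mul, imI_star, imJ_sub, imJ_mul, imJ_star, imK_sub, imK_mul, imK_star]
  ring

end QuaternionAlgebra

open QuaternionAlgebra

variable {a b : ℚ}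

def trdGram {ι : Type*} (v : ι → ℍ[ℚ,a,b]) : Matrix ι ι ℚ :=
  Matrix.of fun i j => Trd (v i * star (v j))

theorem Trd_eq_two_mul_re (x : ℍ[ℚ,a,b]) : Trd x = 2 * x.re := by
  rw [Trd, re_star, zero_mul, add_zero, two_mul]

theorem triForm_eq_mul_det (v : Fin 3 → ℍ[ℚ,a,b]) :
    triForm (v 0) (v 1) (v 2) = 4 * a * b * (imCoordMatrix v).det := by
  rw [triForm, Trd_eq_two_mul_re, re_commutator_mul_star]
  ring

theorem triForm_comp_perm (v : Fin 3 → ℍ[ℚ,a,b]) (σ : Equiv.Perm (Fin 3)) :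
    triForm (v (σ 0)) (v (σ 1)) (v (σ 2)) = Equiv.Perm.sign σ * triForm (v 0) (v 1) (v 2) :=
  calc triForm (v (σ 0)) (v (σ 1)) (v (σ 2))
      = 4 * a * b * ((imCoordMatrix v).submatrix σ id).det := triForm_eq_mul_det (v ∘ σ)
    _ = Equiv.Perm.sign σ * triForm (v 0) (v 1) (v 2) := by
      rw [det_permute, triForm_eq_mul_det v]
      ring

theorem trdGram_eq_coordMatrix_mul_diagonal_mul_transpose {ι : Type*} (v : ι → ℍ[ℚ,a,b]) :
    trdGram v = coordMatrix v * diagonal ![2, -2 * a, -2 * b, 2 * a * b] * (coordMatrix v)ᵀ := by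
  ext i j
  rw [trdGram, of_apply, Trd_eq_two_mul_re, re_mul_star, mul_apply, Fin.sum_univ_four]
  simp only [mul_diagonal, transpose_apply, coordMatrix, of_apply,
    QuaternionAlgebra.equivTuple_apply, cons_val]
  ring

theorem det_trdGram_vecCons_one (v : Fin 3 → ℍ[ℚ,a,b]) :
    (trdGram (vecCons 1 v)).det = triForm (v 0) (v 1) (v 2) ^ 2 := by
  rw [trdGram_eq_coordMatrix_mul_diagonal_mul_transpose, det_mul, det_mul, det_transpose,
    det_diagonal, Fin.prod_univ_four, det_coordMatrix_vecCons_one, triForm_eq_mul_det]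
  simp only [cons_val]
  ring

theorem triForm_sq_eq_gram_det_and_alternating_general {a b : ℚ}
    (α₁ α₂ α₃ : ℍ[ℚ,a,b]) :
    (triForm α₁ α₂ α₃) ^ 2 =
      Matrix.det (Matrix.of fun i j : Fin 4 =>
        Trd ((![1, α₁, α₂, α₃] i) * star (![1, α₁, α₂, α₃] j))) ∧
    ∀ σ : Equiv.Perm (Fin 3),
      triForm (![α₁, α₂, α₃] (σ 0)) (![α₁, α₂, α₃] (σ 1)) (![α₁, α₂, α₃] (σ 2)) =
        ((Equiv.Perm.sign σ : ℤ) : ℚ) * triForm α₁ α₂ α₃ :=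
  ⟨(det_trdGram_vecCons_one ![α₁, α₂, α₃]).symm, triForm_comp_perm ![α₁, α₂, α₃]⟩

/-- For `α₀ = 1, α₁, α₂, α₃` in a quaternion algebra over `ℚ`, the
trilinear form `m(α₁,α₂,α₃) = Trd((α₁α₂ − α₂α₁)ᾱ₃)` satisfies
`m(α₁,α₂,α₃)² = det (Trd(αᵢ ᾱⱼ))_{0 ≤ i,j ≤ 3}`, and `m` is alternating under
permutations of its three arguments. -/
theorem triForm_sq_eq_gram_det_and_alternating {a b : ℚ} (ha : a ≠ 0) (hb : b ≠ 0)
    (α₁ α₂ α₃ : ℍ[ℚ,a,b]) :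
    (triForm α₁ α₂ α₃) ^ 2 =
      Matrix.det (Matrix.of fun i j : Fin 4 =>
        Trd ((![1, α₁, α₂, α₃] i) * star (![1, α₁, α₂, α₃] j))) ∧
    ∀ σ : Equiv.Perm (Fin 3),
      triForm (![α₁, α₂, α₃] (σ 0)) (![α₁, α₂, α₃] (σ 1)) (![α₁, α₂, α₃] (σ 2)) =
        ((Equiv.Perm.sign σ : ℤ) : ℚ) * triForm α₁ α₂ α₃ :=
  triForm_sq_eq_gram_det_and_alternating_general α₁ α₂ α₃

end
end
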